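/- Let (V, Q) be an FBAS whose top tier T is symmetric with non-nested quorum set (T, ∅, t), where m = |T| and 1 ≤ t ≤ m; that is, T is the union of all minimal quorums of (V, Q) and for every v ∈ T, Q(v) = {q ⊆ V : v ∈ q and |q ∩ T| ≥ t}. Then every minimal blocking set of (V, Q) has cardinality exactly m − t + 1. -/

import Mathlib

open Finset

variable {α : Type*} [DecidableEq α]

/-- `U` is a quorum of the FBAS `(V, Q)`: a nonempty subset of `V` containing,
for every member `v`, some slice `q ∈ Q v` with `q ⊆ U`. -/
def IsQuorum (V : Finset α) (Q : α → Finset (Finset α)) (U : Finset α) : Prop :=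
  U ⊆ V ∧ U.Nonempty ∧ ∀ v ∈ U, ∃ q ∈ Q v, q ⊆ U

/-- A minimal quorum: a quorum none of whose proper subsets is a quorum. -/
def IsMinimalQuorum (V : Finset α) (Q : α → Finset (Finset α)) (U : Finset α) : Prop :=
  IsQuorum V Q U ∧ ∀ U' ⊂ U, ¬IsQuorum V Q U'

/-- A blocking set: a subset of `V` intersecting every quorum of `(V, Q)`. -/
def IsBlocking (V : Finset α) (Q : α → Finset (Finset α)) (B : Finset α) : Prop :=
  B ⊆ V ∧ ∀ U, IsQuorum V Q U → (B ∩ U).Nonempty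

/-- A minimal blocking set: a blocking set none of whose proper subsets is blocking. -/
def IsMinimalBlocking (V : Finset α) (Q : α → Finset (Finset α)) (B : Finset α) : Prop :=
  IsBlocking V Q B ∧ ∀ B' ⊂ B, ¬IsBlocking V Q B'

/-- A splitting set: a subset of `V` containing the intersection of two distinct quorums. -/
def IsSplitting (V : Finset α) (Q : α → Finset (Finset α)) (S : Finset α) : Prop :=
  S ⊆ V ∧ ∃ U₁ U₂, IsQuorum V Q U₁ ∧ IsQuorum V Q U₂ ∧ U₁ ≠ U₂ ∧ U₁ ∩ U₂ ⊆ S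

/-- A minimal splitting set: a splitting set none of whose proper subsets is splitting. -/
def IsMinimalSplitting (V : Finset α) (Q : α → Finset (Finset α)) (S : Finset α) : Prop :=
  IsSplitting V Q S ∧ ∀ S' ⊂ S, ¬IsSplitting V Q S'

/-- Well-formedness of an FBAS `(V, Q)`: every slice of every node `v ∈ V`
contains `v` and is a subset of `V`. -/
def WellFormed (V : Finset α) (Q : α → Finset (Finset α)) : Prop :=
  ∀ v ∈ V, ∀ q ∈ Q v, v ∈ q ∧ q ⊆ V

/-- `T` is the top tier of `(V, Q)`: the union of all minimal quorums. -/
def IsTopTier (V : Finset α) (Q : α → Finset (Finset α)) (T : Finset α) : Prop :=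
  ∀ v, v ∈ T ↔ ∃ U, IsMinimalQuorum V Q U ∧ v ∈ U

/-- `(V, Q)` enjoys quorum intersection: any two quorums share a node. -/
def QuorumIntersection (V : Finset α) (Q : α → Finset (Finset α)) : Prop :=
  ∀ U₁ U₂, IsQuorum V Q U₁ → IsQuorum V Q U₂ → (U₁ ∩ U₂).Nonempty

/-!
Every quorum contains a minimal quorum, which lies in `T` and therefore contains a slice
meeting `T` in at least `t` nodes; conversely, every subset of `T` with at least `t` nodes is
a quorum. Hence a subset `B ⊆ T` is blocking exactly when `T \ B` has fewer than `t` nodes,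
i.e. when `|B| > |T| - t`. A minimal blocking set lies inside `T`, since its trace on `T` is
still blocking, so by minimality it has exactly `|T| - t + 1` nodes.
-/

theorem IsQuorum.exists_isMinimalQuorum_subset {α : Type*} {V : Finset α}
    {Q : α → Finset (Finset α)} {U : Finset α} (hU : IsQuorum V Q U) :
    ∃ U' ⊆ U, IsMinimalQuorum V Q U' := by
  induction U using Finset.strongInduction with
  | _ U ih =>
    by_cases hmin : ∀ U' ⊂ U, ¬IsQuorum V Q U'
    · exact ⟨U, Subset.rfl, hU, hmin⟩
    · push Not at hmin
      obtain ⟨U', hU'U, hU'⟩ := hmin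
      obtain ⟨W, hWU', hW⟩ := ih U' hU'U hU'
      exact ⟨W, hWU'.trans hU'U.subset, hW⟩

namespace IsTopTier

theorem subset_of_isMinimalQuorum {α : Type*} {V : Finset α} {Q : α → Finset (Finset α)}
    {T U : Finset α} (hT : IsTopTier V Q T) (hU : IsMinimalQuorum V Q U) : U ⊆ T :=
  fun v hv => (hT v).2 ⟨U, hU, hv⟩

theorem subset {α : Type*} {V : Finset α} {Q : α → Finset (Finset α)} {T : Finset α}
    (hT : IsTopTier V Q T) : T ⊆ V := fun v hv => by
  obtain ⟨U, hU, hvU⟩ := (hT v).1 hv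
  exact hU.1.1 hvU

variable {V : Finset α} {Q : α → Finset (Finset α)} {T : Finset α}

theorem isBlocking_inter (hT : IsTopTier V Q T) {B : Finset α} (hB : IsBlocking V Q B) :
    IsBlocking V Q (B ∩ T) := by
  refine ⟨inter_subset_left.trans hB.1, fun U hU => ?_⟩
  obtain ⟨U', hU'U, hU'⟩ := hU.exists_isMinimalQuorum_subset
  obtain ⟨x, hx⟩ := hB.2 U' hU'.1
  rw [mem_inter] at hx
  exact ⟨x, mem_inter.2 ⟨mem_inter.2 ⟨hx.1, hT.subset_of_isMinimalQuorum hU' hx.2⟩, hU'U hx.2⟩⟩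

theorem subset_of_isMinimalBlocking (hT : IsTopTier V Q T) {B : Finset α}
    (hB : IsMinimalBlocking V Q B) : B ⊆ T := by
  rw [← inter_eq_left]
  by_contra hne
  exact hB.2 _ (inter_subset_left.ssubset_of_ne hne) (hT.isBlocking_inter hB.1)

end IsTopTier

/-- `T` is symmetric with non-nested quorum set `(T, ∅, t)`. -/
def IsSymmetricThreshold (V : Finset α) (Q : α → Finset (Finset α)) (T : Finset α) (t : ℕ) :
    Prop :=
  ∀ v ∈ T, ∀ q : Finset α, q ∈ Q v ↔ (q ⊆ V ∧ v ∈ q ∧ t ≤ #(q ∩ T))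

namespace IsSymmetricThreshold

variable {V : Finset α} {Q : α → Finset (Finset α)} {T : Finset α} {t : ℕ}

theorem le_card_inter_of_isQuorum (hsym : IsSymmetricThreshold V Q T t)
    (hT : IsTopTier V Q T) {U : Finset α} (hU : IsQuorum V Q U) : t ≤ #(U ∩ T) := by
  obtain ⟨U', hU'U, hU'⟩ := hU.exists_isMinimalQuorum_subset
  obtain ⟨v, hv⟩ := hU'.1.2.1
  obtain ⟨q, hq, hqU'⟩ := hU'.1.2.2 v hv
  calc t ≤ #(q ∩ T) := ((hsym v (hT.subset_of_isMinimalQuorum hU' hv) q).1 hq).2.2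
    _ ≤ #(U ∩ T) := card_le_card (inter_subset_inter (hqU'.trans hU'U) Subset.rfl)

theorem isQuorum_of_subset (hsym : IsSymmetricThreshold V Q T t) (hTV : T ⊆ V) (ht : 0 < t)
    {S : Finset α} (hST : S ⊆ T) (hS : t ≤ #S) : IsQuorum V Q S := by
  refine ⟨hST.trans hTV, card_pos.1 (ht.trans_le hS), fun v hv => ⟨S, ?_, Subset.rfl⟩⟩
  rw [hsym v (hST hv), inter_eq_left.2 hST]
  exact ⟨hST.trans hTV, hv, hS⟩

theorem isBlocking_iff_of_subset (hsym : IsSymmetricThreshold V Q T t)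
    (hT : IsTopTier V Q T) (ht : 0 < t) {B : Finset α} (hBT : B ⊆ T) :
    IsBlocking V Q B ↔ #T < t + #B := by
  constructor
  · intro hB
    by_contra! hsmall
    have hcompl : t ≤ #(T \ B) := by rw [card_sdiff_of_subset hBT]; omega
    obtain ⟨x, hx⟩ := hB.2 _ (hsym.isQuorum_of_subset hT.subset ht sdiff_subset hcompl)
    rw [mem_inter, mem_sdiff] at hx
    exact hx.2.2 hx.1
  · refine fun hlarge => ⟨hBT.trans hT.subset, fun U hU => ?_⟩
    have hUT := hsym.le_card_inter_of_isQuorum hT hU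
    exact (inter_nonempty_of_card_lt_card_add_card hBT inter_subset_right (by omega)).mono
      (inter_subset_inter_left inter_subset_left)

end IsSymmetricThreshold

theorem symmetric_top_tier_minimal_blocking_card_general
    (V : Finset α) (Q : α → Finset (Finset α))
    (T : Finset α) (hT : IsTopTier V Q T)
    (t : ℕ) (ht1 : 1 ≤ t) (ht2 : t ≤ T.card)
    (hsym : ∀ v ∈ T, ∀ q : Finset α, q ∈ Q v ↔ (q ⊆ V ∧ v ∈ q ∧ t ≤ (q ∩ T).card)) :
    ∀ B, IsMinimalBlocking V Q B → B.card = T.card - t + 1 := by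
  replace hsym : IsSymmetricThreshold V Q T t := hsym
  intro B hB
  have hBT := hT.subset_of_isMinimalBlocking hB
  have hlower := (hsym.isBlocking_iff_of_subset hT ht1 hBT).1 hB.1
  obtain ⟨x, hx⟩ : B.Nonempty := card_pos.1 (by omega)
  have hupper : ¬#T < t + #(B.erase x) := fun hlarge =>
    hB.2 _ (erase_ssubset hx)
      ((hsym.isBlocking_iff_of_subset hT ht1 ((erase_subset x B).trans hBT)).2 hlarge)
  rw [card_erase_of_mem hx] at hupper
  omega

/-- in an FBAS with a symmetric top tier `T` with non-nested quorum
set `(T, ∅, t)` (with `1 ≤ t ≤ |T|`), every minimal blocking set has cardinality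
exactly `|T| - t + 1`. -/
theorem symmetric_top_tier_minimal_blocking_card
    (V : Finset α) (Q : α → Finset (Finset α)) (hwf : WellFormed V Q)
    (T : Finset α) (hT : IsTopTier V Q T)
    (t : ℕ) (ht1 : 1 ≤ t) (ht2 : t ≤ T.card)
    (hsym : ∀ v ∈ T, ∀ q : Finset α, q ∈ Q v ↔ (q ⊆ V ∧ v ∈ q ∧ t ≤ (q ∩ T).card)) :
    ∀ B, IsMinimalBlocking V Q B → B.card = T.card - t + 1 :=
  symmetric_top_tier_minimal_blocking_card_general V Q T hT t ht1 ht2 hsym
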